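/- arXiv:1203.6515 — 6 statements merged into one kernel-verified Lean document; each statement's English description precedes it below -/
import Mathlib

section
/- Let F be a finite nonempty d-uniform Ferrers hypergraph on vertex sets X^{(1)} ⊔ ... ⊔ X^{(d)} (each X^{(j)} a set of positive integers {1,...,n_j}), with d ≥ 2. For j ∈ {1,...,d}, let F_j = {(i_1,...,î_j,...,i_d) : ∃ i_j with (i_1,...,i_d) ∈ F}, and for S = (i_1,...,î_j,...,i_d) ∈ F_j set n_S = max{i_j : (i_1,...,i_j,...,i_d) ∈ F} and k_S = n_S − d + ∑_{p≠j} i_p. Then ∑_{j=1}^d ∑_{S∈F_j} n_S / C(d + k_S, d) = d. -/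
/-!
Remove a maximal cell `x` of `F`, and put `T = ∑ p, x p`. In each direction `j` only the column
through `x` changes: its height drops from `x j` to `x j - 1` and its `k_S` drops by one, while a
column of height zero contributes nothing. Summing over `j`, the left-hand side changes by
`T / C(T, d) - (T - d) / C(T - 1, d)`, which vanishes because `T · C(T - 1, d) = (T - d) · C(T, d)`,
except when `x` is the all-ones vector, the last cell to be removed, where it equals `d`.
-/

open Finset Function

namespace Ferrers

variable {d : ℕ}

structure IsFerrers (F : Finset (Fin d → ℕ)) : Prop where
  one_le : ∀ x ∈ F, 1 ≤ x
  mem_of_le : ∀ x ∈ F, ∀ y, 1 ≤ y → y ≤ x → y ∈ F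

noncomputable def columnHeight (F : Finset (Fin d → ℕ)) (j : Fin d) (S : Fin d → ℕ) : ℕ :=
  sSup {m | update S j m ∈ F}

noncomputable def columnTerm (F : Finset (Fin d → ℕ)) (j : Fin d) (S : Fin d → ℕ) : ℚ :=
  columnHeight F j S / (d + (columnHeight F j S + ∑ p ∈ univ.erase j, S p - d)).choose d

noncomputable def ferrersSum (F : Finset (Fin d → ℕ)) : ℚ :=
  ∑ j, ∑ S ∈ F.image (update · j 0), columnTerm F j S

lemma _root_.Nat.sSup_Icc_one (n : ℕ) : sSup (Set.Icc 1 n) = n := by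
  rcases Nat.eq_zero_or_pos n with rfl | hn
  · simp
  · exact csSup_Icc hn

lemma card_le_sum_of_one_le {x : Fin d → ℕ} (hx : 1 ≤ x) : d ≤ ∑ p, x p := by
  simpa using card_nsmul_le_sum univ x 1 fun p _ => hx p

lemma sum_eq_card_iff_eq_one {x : Fin d → ℕ} (hx : 1 ≤ x) : ∑ p, x p = d ↔ x = 1 := by
  simpa [funext_iff, eq_comm] using sum_eq_sum_iff_of_le (s := univ) (f := 1) fun p _ => hx p

lemma sum_erase_update_zero (x : Fin d → ℕ) (j : Fin d) :
    ∑ p ∈ univ.erase j, update x j 0 p = ∑ p, x p - x j := by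
  rw [sum_congr rfl fun p hp => update_of_ne (ne_of_mem_erase hp) _ _,
    ← add_sum_erase _ _ (mem_univ j), Nat.add_sub_cancel_left]

lemma div_choose_eq_of_lt {d T : ℕ} (h : d < T) :
    (T : ℚ) / T.choose d = (T - d : ℕ) / (T - 1).choose d := by
  obtain ⟨n, rfl⟩ : ∃ n, T = n + 1 := ⟨T - 1, by omega⟩
  have key := Nat.choose_mul_succ_eq n d
  rw [div_eq_div_iff (by exact_mod_cast (Nat.choose_pos h.le).ne')
    (by exact_mod_cast (Nat.choose_pos (by omega)).ne'), Nat.add_sub_cancel]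
  exact_mod_cast by linarith [key]

variable {F : Finset (Fin d → ℕ)} {x : Fin d → ℕ}

lemma IsFerrers.erase (hF : IsFerrers F) (hx : Maximal (· ∈ F) x) : IsFerrers (F.erase x) where
  one_le y hy := hF.one_le y (mem_of_mem_erase hy)
  mem_of_le y hy z hz hzy := by
    obtain ⟨hyx, hyF⟩ := mem_erase.1 hy
    refine mem_erase.2 ⟨?_, hF.mem_of_le y hyF z hz hzy⟩
    rintro rfl
    exact hyx (le_antisymm (hx.2 hyF hzy) hzy)

lemma IsFerrers.column_eq_Icc (hF : IsFerrers F) (hx : Maximal (· ∈ F) x) (j : Fin d) :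
    {m | update x j m ∈ F} = Set.Icc 1 (x j) := by
  ext m
  refine ⟨fun hm => ⟨by simpa using hF.one_le _ hm j, ?_⟩, fun hm => ?_⟩
  · by_contra! hlt
    exact hlt.not_ge (update_le_iff.1 (hx.2 hm (le_update_iff.2 ⟨hlt.le, fun _ _ => le_rfl⟩))).1
  · exact hF.mem_of_le x hx.1 _ (le_update_iff.2 ⟨hm.1, fun p _ => hF.one_le x hx.1 p⟩)
      (update_le_iff.2 ⟨hm.2, fun _ _ => le_rfl⟩)

lemma IsFerrers.column_erase_eq_Icc (hF : IsFerrers F) (hx : Maximal (· ∈ F) x) (j : Fin d) :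
    {m | update x j m ∈ F.erase x} = Set.Icc 1 (x j - 1) := by
  ext m
  have h := Set.ext_iff.1 (hF.column_eq_Icc hx j) m
  simp only [Set.mem_ofPred_eq, Set.mem_Icc] at h ⊢
  rw [mem_erase, h, Ne, update_eq_self_iff]
  omega

lemma columnTerm_erase_of_ne {S : Fin d → ℕ} {j : Fin d} (h : update S j 0 ≠ update x j 0) :
    columnTerm (F.erase x) j S = columnTerm F j S := by
  have hcol : {m | update S j m ∈ F.erase x} = {m | update S j m ∈ F} := by
    ext m
    simp only [Set.mem_ofPred_eq, mem_erase, and_iff_right_iff_imp]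
    rintro - rfl
    exact h (update_idem ..).symm
  simp only [columnTerm, columnHeight, hcol]

-- An empty column has height `sSup ∅ = 0`, so its term vanishes.
lemma columnTerm_eq_zero_of_notMem {S : Fin d → ℕ} {j : Fin d}
    (hS : S ∉ F.image (update · j 0)) (hS0 : S j = 0) : columnTerm F j S = 0 := by
  have hcol : {m | update S j m ∈ F} = ∅ := by
    refine Set.eq_empty_of_forall_notMem fun m hm => hS (mem_image.2 ⟨_, hm, ?_⟩)
    rw [update_idem, update_eq_self_iff, hS0]
  simp [columnTerm, columnHeight, hcol]

lemma IsFerrers.columnTerm_corner (hF : IsFerrers F) (hx : Maximal (· ∈ F) x) (j : Fin d) :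
    columnTerm F j (update x j 0) = x j / (∑ p, x p).choose d := by
  have hd := card_le_sum_of_one_le (hF.one_le x hx.1)
  have hj : x j ≤ ∑ p, x p := single_le_sum (fun _ _ => Nat.zero_le _) (mem_univ j)
  simp only [columnTerm, columnHeight, update_idem, hF.column_eq_Icc hx j, Nat.sSup_Icc_one,
    sum_erase_update_zero]
  rw [show d + (x j + (∑ p, x p - x j) - d) = ∑ p, x p by omega]

-- The truncated `∑ p, x p - 1 - d` keeps this true when `x = 1`, where the numerator is `0`.
lemma IsFerrers.columnTerm_erase_corner (hF : IsFerrers F) (hx : Maximal (· ∈ F) x) (j : Fin d) :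
    columnTerm (F.erase x) j (update x j 0) =
      (x j - 1 : ℕ) / (d + (∑ p, x p - 1 - d)).choose d := by
  have hj1 : 1 ≤ x j := hF.one_le x hx.1 j
  have hj : x j ≤ ∑ p, x p := single_le_sum (fun _ _ => Nat.zero_le _) (mem_univ j)
  simp only [columnTerm, columnHeight, update_idem, hF.column_erase_eq_Icc hx j, Nat.sSup_Icc_one,
    sum_erase_update_zero]
  rw [show x j - 1 + (∑ p, x p - x j) = ∑ p, x p - 1 by omega]

lemma directionSum_eq_erase_add (hx : x ∈ F) (j : Fin d) :
    ∑ S ∈ F.image (update · j 0), columnTerm F j S =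
      ∑ S ∈ (F.erase x).image (update · j 0), columnTerm (F.erase x) j S +
        (columnTerm F j (update x j 0) - columnTerm (F.erase x) j (update x j 0)) := by
  have hx0 : update x j 0 ∈ F.image (update · j 0) := mem_image_of_mem _ hx
  have hvanish : ∀ S ∈ F.image (update · j 0), S ∉ (F.erase x).image (update · j 0) →
      columnTerm (F.erase x) j S = 0 := by
    rintro _ hS hS'
    obtain ⟨y, -, rfl⟩ := mem_image.1 hS
    exact columnTerm_eq_zero_of_notMem hS' (update_self ..)
  rw [sum_subset (image_subset_image (erase_subset x F)) hvanish, ← add_sum_erase _ _ hx0,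
    ← add_sum_erase _ _ hx0, sum_congr rfl fun S hS => columnTerm_erase_of_ne ?_]
  · ring
  obtain ⟨hSx, hS⟩ := mem_erase.1 hS
  obtain ⟨y, -, rfl⟩ := mem_image.1 hS
  rwa [update_idem]

lemma IsFerrers.ferrersSum_eq_erase_add (hF : IsFerrers F) (hx : Maximal (· ∈ F) x) :
    ferrersSum F = ferrersSum (F.erase x) +
      ((∑ p, x p : ℕ) / (∑ p, x p).choose d -
        (∑ p, x p - d : ℕ) / (d + (∑ p, x p - 1 - d)).choose d) := by
  have hsub : ∑ p, (x p - 1) = ∑ p, x p - d := by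
    rw [sum_tsub_distrib (g := fun _ => 1) _ fun p _ => hF.one_le x hx.1 p]
    simp
  simp only [ferrersSum, directionSum_eq_erase_add hx.1, sum_add_distrib,
    hF.columnTerm_corner hx, hF.columnTerm_erase_corner hx, sum_sub_distrib, ← sum_div, ← hsub]
  push_cast
  rfl

lemma IsFerrers.ferrersSum_eq (hF : IsFerrers F) (hne : F.Nonempty) : ferrersSum F = d := by
  induction F using Finset.strongInduction with
  | H F ih =>
  obtain ⟨x, hx⟩ := F.exists_maximal hne
  have hx1 := hF.one_le x hx.1
  rw [hF.ferrersSum_eq_erase_add hx]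
  rcases (F.erase x).eq_empty_or_nonempty with hempty | ⟨y, hy⟩
  · have hx_eq : x = 1 := by
      by_contra h
      have : 1 ∈ F.erase x := mem_erase.2 ⟨Ne.symm h, hF.mem_of_le x hx.1 1 le_rfl hx1⟩
      simp [hempty] at this
    subst hx_eq
    simp [hempty, ferrersSum]
  · have hlt : d < ∑ p, x p := by
      refine (card_le_sum_of_one_le hx1).lt_of_ne fun h => ?_
      obtain ⟨hyx, hyF⟩ := mem_erase.1 hy
      have hxy : x ≤ y := (sum_eq_card_iff_eq_one hx1).1 h.symm ▸ hF.one_le y hyF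
      exact hyx (le_antisymm (hx.2 hyF hxy) hxy)
    rw [ih _ (erase_ssubset hx.1) (hF.erase hx) ⟨y, hy⟩,
      show d + (∑ p, x p - 1 - d) = ∑ p, x p - 1 by omega, div_choose_eq_of_lt hlt, sub_self,
      add_zero]

end Ferrers

theorem stmt_3_general (d : ℕ) (F : Finset (Fin d → ℕ)) (hne : F.Nonempty)
    (hpos : ∀ x ∈ F, ∀ j, 1 ≤ x j)
    (hdc : ∀ x ∈ F, ∀ y : Fin d → ℕ, (∀ j, 1 ≤ y j) → (∀ j, y j ≤ x j) → y ∈ F) :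
    ∑ j : Fin d, ∑ S ∈ F.image (fun x => Function.update x j 0),
      (let nS : ℕ := sSup {m | Function.update S j m ∈ F}
       let kS : ℕ := nS + (∑ p ∈ Finset.univ.erase j, S p) - d
       (nS : ℚ) / ((d + kS).choose d : ℚ)) = (d : ℚ) :=
  Ferrers.IsFerrers.ferrersSum_eq ⟨hpos, hdc⟩ hne

/-- The curious Ferrers identity: ∑_{j=1}^d ∑_{S∈F_j} n_S / C(d+k_S, d) = d.
    F_j is encoded as the image of F under setting the j-th coordinate to 0,
    n_S is the largest m with the j-th coordinate restored to m still in F, and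
    k_S = n_S − d + ∑_{p≠j} S_p. -/
theorem stmt_3 (d : ℕ) (hd : 2 ≤ d) (F : Finset (Fin d → ℕ)) (hne : F.Nonempty)
    (hpos : ∀ x ∈ F, ∀ j, 1 ≤ x j)
    (hdc : ∀ x ∈ F, ∀ y : Fin d → ℕ, (∀ j, 1 ≤ y j) → (∀ j, y j ≤ x j) → y ∈ F) :
    ∑ j : Fin d, ∑ S ∈ F.image (fun x => Function.update x j 0),
      (let nS : ℕ := sSup {m | Function.update S j m ∈ F}
       let kS : ℕ := nS + (∑ p ∈ Finset.univ.erase j, S p) - d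
       (nS : ℚ) / ((d + kS).choose d : ℚ)) = (d : ℚ) :=
  stmt_3_general d F hne hpos hdc
end

section
/- Let F be a d-uniform Ferrers hypergraph with d ≥ 2, and adopt the notation F_j, n_S, k_S as in the Boij-Söderberg quotient decomposition. Then for every integer i ≥ 1: (d + i − 1) · ∑_{(i_1,...,i_d)∈F} C(i_1+...+i_d − d, i−1) = ∑_{j=1}^d ∑_{S∈F_j} n_S · C(k_S, i−1). -/
/-!
Give each cell `x ∈ F` and direction `j` the weight `g (x j) |x| - g (x j - 1) (|x| - 1)`,
where `g m s = m * C(s - d, k)` and `|x| = ∑ p, x p`. Along the line of `F` through `S` in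
direction `j`, whose cells have `j`-th coordinate `1, …, n_S`, these weights telescope to
`g n_S (n_S + |S|) = n_S * C(k_S, k)`. At a fixed cell, with `b = |x| - d`, the weights sum over
`j` to `(b + d) * C(b, k) - b * C(b - 1, k) = (d + k) * C(b, k)`. Summing all weights in both
orders gives the identity with `k = i - 1`.
-/

open Finset Function

namespace FerrersHypergraph

variable {d : ℕ}

def columnTerm (d k m s : ℕ) : ℕ := m * (s - d).choose k

def cellWeight (k : ℕ) (j : Fin d) (x : Fin d → ℕ) : ℕ :=
  columnTerm d k (x j) (∑ p, x p) - columnTerm d k (x j - 1) (∑ p, x p - 1)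

lemma monotone_columnTerm (d k σ : ℕ) : Monotone fun m => columnTerm d k m (m + σ) :=
  fun _ _ hab => Nat.mul_le_mul hab (Nat.choose_le_choose _ (by omega))

lemma sum_update_eq_add_sum_erase (x : Fin d → ℕ) (j : Fin d) (m : ℕ) :
    ∑ p, update x j m p = m + ∑ p ∈ univ.erase j, x p := by
  rw [sum_update_of_mem (mem_univ j), sdiff_singleton_eq_erase]

lemma cellWeight_update (k : ℕ) (x : Fin d → ℕ) (j : Fin d) {m : ℕ} (hm : 1 ≤ m) :
    cellWeight k j (update x j m) =
      columnTerm d k m (m + ∑ p ∈ univ.erase j, x p) -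
        columnTerm d k (m - 1) (m - 1 + ∑ p ∈ univ.erase j, x p) := by
  rw [cellWeight, sum_update_eq_add_sum_erase, update_self, Nat.sub_add_comm hm]

lemma sum_Icc_cellWeight_update (k : ℕ) (x : Fin d → ℕ) (j : Fin d) (n : ℕ) :
    ∑ m ∈ Icc 1 n, cellWeight k j (update x j m) =
      columnTerm d k n (n + ∑ p ∈ univ.erase j, x p) := by
  induction n with
  | zero => simp [columnTerm]
  | succ n ih =>
    rw [sum_Icc_succ_top (by omega), ih, cellWeight_update k x j (by omega), Nat.add_sub_cancel,
      Nat.add_sub_cancel' (monotone_columnTerm d k _ n.le_succ)]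

lemma mul_choose_pred_add (b k : ℕ) : b * (b - 1).choose k + k * b.choose k = b * b.choose k := by
  rcases b with _ | b
  · cases k <;> simp
  · have := Nat.choose_mul_succ_eq b k
    rcases le_or_gt k (b + 1) with hk | hk
    · rw [Nat.add_sub_cancel, mul_comm, this, mul_comm k, ← mul_add, Nat.sub_add_cancel hk, mul_comm]
    · simp [Nat.choose_eq_zero_of_lt hk, Nat.choose_eq_zero_of_lt (by omega : b < k)]

lemma sum_cellWeight (k : ℕ) {x : Fin d → ℕ} (hx : ∀ p, 1 ≤ x p) :
    ∑ j, cellWeight k j x = (d + k) * (∑ p, x p - d).choose k := by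
  obtain ⟨b, hb⟩ : ∃ b, ∑ p, x p = b + d :=
    ⟨_, (Nat.sub_add_cancel (by simpa using sum_le_sum fun p (_ : p ∈ univ) => hx p)).symm⟩
  have hpred : ∑ p, (x p - 1) = b := by
    rw [sum_tsub_distrib _ fun p _ => hx p, hb]; simp
  have hle : ∀ j, columnTerm d k (x j - 1) (b + d - 1) ≤ columnTerm d k (x j) (b + d) :=
    fun j => Nat.mul_le_mul (Nat.sub_le _ _) (Nat.choose_le_choose _ (by omega))
  simp only [cellWeight, hb]
  rw [sum_tsub_distrib _ fun j _ => hle j]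
  simp only [columnTerm, ← sum_mul, hb, hpred, Nat.add_sub_cancel, Nat.sub_right_comm _ 1 d]
  refine Nat.sub_eq_of_eq_add ?_
  rw [add_mul, ← mul_choose_pred_add]
  ring

variable {F : Finset (Fin d → ℕ)}

lemma update_mem_iff (hpos : ∀ x ∈ F, ∀ j, 1 ≤ x j)
    (hdc : ∀ x ∈ F, ∀ y : Fin d → ℕ, (∀ j, 1 ≤ y j) → (∀ j, y j ≤ x j) → y ∈ F)
    {x : Fin d → ℕ} (hx : x ∈ F) (j : Fin d) (m : ℕ) :
    update x j m ∈ F ↔ m ∈ Icc 1 (sSup {m | update x j m ∈ F}) := by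
  set A := {m | update x j m ∈ F}
  have hA : BddAbove A := Set.Finite.bddAbove <| (F.image (· j)).finite_toSet.subset
    fun m hm => mem_image.2 ⟨_, hm, update_self ..⟩
  have hxA : x j ∈ A := by simpa [A] using hx
  refine ⟨fun hm => mem_Icc.2 ⟨by simpa using hpos _ hm j, le_csSup hA hm⟩, fun hm => ?_⟩
  rw [mem_Icc] at hm
  refine hdc _ (Nat.sSup_mem ⟨_, hxA⟩ hA) _ (fun p => ?_) (fun p => ?_)
  · rcases eq_or_ne p j with rfl | hp
    · simpa using hm.1
    · simpa [hp] using hpos x hx p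
  · rcases eq_or_ne p j with rfl | hp
    · simpa using hm.2
    · simp [hp]

lemma filter_update_zero_eq (hpos : ∀ x ∈ F, ∀ j, 1 ≤ x j)
    (hdc : ∀ x ∈ F, ∀ y : Fin d → ℕ, (∀ j, 1 ≤ y j) → (∀ j, y j ≤ x j) → y ∈ F)
    {x : Fin d → ℕ} (hx : x ∈ F) (j : Fin d) :
    {y ∈ F | update y j 0 = update x j 0} =
      (Icc 1 (sSup {m | update x j m ∈ F})).image (update x j) := by
  ext y
  simp only [mem_filter, mem_image]
  constructor
  · rintro ⟨hy, hyx⟩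
    have hxy : update x j (y j) = y := by
      rw [← update_idem 0 (y j) x, ← hyx, update_idem, update_eq_self]
    exact ⟨y j, (update_mem_iff hpos hdc hx j _).1 (by rwa [hxy]), hxy⟩
  · rintro ⟨m, hm, rfl⟩
    exact ⟨(update_mem_iff hpos hdc hx j m).2 hm, by simp⟩

lemma sum_image_update_zero (hpos : ∀ x ∈ F, ∀ j, 1 ≤ x j)
    (hdc : ∀ x ∈ F, ∀ y : Fin d → ℕ, (∀ j, 1 ≤ y j) → (∀ j, y j ≤ x j) → y ∈ F)
    (k : ℕ) (j : Fin d) :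
    ∑ S ∈ F.image (fun x => update x j 0),
        (let nS : ℕ := sSup {m | update S j m ∈ F}
         let kS : ℕ := nS + (∑ p ∈ univ.erase j, S p) - d
         nS * kS.choose k) = ∑ x ∈ F, cellWeight k j x := by
  refine sum_image' _ fun x hx => ?_
  have hrest : ∑ p ∈ univ.erase j, update x j 0 p = ∑ p ∈ univ.erase j, x p :=
    sum_congr rfl fun p hp => update_of_ne (ne_of_mem_erase hp) _ _
  rw [filter_update_zero_eq hpos hdc hx, sum_image fun _ _ _ _ h => update_injective x j h,
    sum_Icc_cellWeight_update]
  simp only [update_idem, hrest, columnTerm]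

end FerrersHypergraph

theorem stmt_4_general (d : ℕ) (F : Finset (Fin d → ℕ))
    (hpos : ∀ x ∈ F, ∀ j, 1 ≤ x j)
    (hdc : ∀ x ∈ F, ∀ y : Fin d → ℕ, (∀ j, 1 ≤ y j) → (∀ j, y j ≤ x j) → y ∈ F)
    (i : ℕ) (hi : 1 ≤ i) :
    (d + i - 1) * ∑ x ∈ F, ((∑ j, x j) - d).choose (i - 1) =
      ∑ j : Fin d, ∑ S ∈ F.image (fun x => Function.update x j 0),
        (let nS : ℕ := sSup {m | Function.update S j m ∈ F}
         let kS : ℕ := nS + (∑ p ∈ Finset.univ.erase j, S p) - d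
         nS * kS.choose (i - 1)) := by
  rw [sum_congr rfl fun j _ => FerrersHypergraph.sum_image_update_zero hpos hdc (i - 1) j,
    sum_comm, mul_sum, Nat.add_sub_assoc hi]
  exact sum_congr rfl fun x hx => (FerrersHypergraph.sum_cellWeight (i - 1) (hpos x hx)).symm

/-- The counting identity behind the Boij–Söderberg decomposition of R/I(F):
    (d+i−1)·∑_{x∈F} C(∑x−d, i−1) = ∑_{j=1}^d ∑_{S∈F_j} n_S·C(k_S, i−1). -/
theorem stmt_4 (d : ℕ) (hd : 2 ≤ d) (F : Finset (Fin d → ℕ))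
    (hpos : ∀ x ∈ F, ∀ j, 1 ≤ x j)
    (hdc : ∀ x ∈ F, ∀ y : Fin d → ℕ, (∀ j, 1 ≤ y j) → (∀ j, y j ≤ x j) → y ∈ F)
    (i : ℕ) (hi : 1 ≤ i) :
    (d + i - 1) * ∑ x ∈ F, ((∑ j, x j) - d).choose (i - 1) =
      ∑ j : Fin d, ∑ S ∈ F.image (fun x => Function.update x j 0),
        (let nS : ℕ := sSup {m | Function.update S j m ∈ F}
         let kS : ℕ := nS + (∑ p ∈ Finset.univ.erase j, S p) - d
         nS * kS.choose (i - 1)) :=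
  stmt_4_general d F hpos hdc i hi
end

section
/- Fix positive integers c, s, t with s ≥ 2t, and for 1 ≤ i ≤ c−1 let a_i = C(c+t−1, i+t)·C(t−1+i, t). For 1 ≤ j ≤ c, let σ_j = (0, d_{j,1}, ..., d_{j,c−1}, s+c) where d_{j,k} = t+k if 1 ≤ k ≤ c−j and d_{j,k} = s−t+k if c−j+1 ≤ k ≤ c−1. Set b = (s+1−2t)·(t+c−1)!/t! and a = (s+1−t)·(t+c−1)!/t!. Then for each i with 1 ≤ i ≤ c−1: a_i = a·β_i(π_{σ_1}) + b·∑_{j=2}^{c−i} β_i(π_{σ_j}), where β_i(π_{σ_j}) = ∏_{k≠i} 1/|d_{j,i} − d_{j,k}| (indices including the entries 0 and s+c). -/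
/-!
For `j ≤ c - i` the `i`-th entry of `σ_j` is `t + i`, so the distances `|σ_j(i) - σ_j(k)|` are
`i - k` below `i`, `k - i` along the first strand, `s - 2t + k - i` along the second one, and
`t + i`, `s - t + c - i` at the two ends. Hence
`β_i(π_{σ_j}) = (s-2t+c-i-j)! / ((t+i)(s-t+c-i)(i-1)!(c-j-i)!(s-2t+c-1-i)!)`, in which only
`(s-2t+c-i-j)!/(c-j-i)!` depends on `j`. Summing over `j` is the hockey-stick identity
`(u+1) ∑_{l ≤ n} (u+l)!/l! = (u+n+1)!/n!` with `u = s - 2t`, and the theorem becomes an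
identity between quotients of factorials.
-/

/-- The degree sequence σ_j = (0, d_{j,1},...,d_{j,c−1}, s+c) with
    d_{j,k} = t+k for 1 ≤ k ≤ c−j and d_{j,k} = s−t+k for c−j+1 ≤ k ≤ c−1. -/
def gorSeq (c s t j : ℕ) : ℕ → ℤ := fun k =>
  if k = 0 then 0
  else if k = c then (s : ℤ) + c
  else if k ≤ c - j then (t : ℤ) + k
  else (s : ℤ) - t + k

/-- Entry in homological degree i of the pure diagram with degree sequence σ
    (indexed by 0,...,c). -/
def pureEntry (c : ℕ) (σ : ℕ → ℤ) (i : ℕ) : ℚ :=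
  ∏ k ∈ (Finset.range (c + 1)).erase i, (1 : ℚ) / ((|σ i - σ k| : ℤ) : ℚ)

open Finset Nat

theorem pureEntry_eq_one_div (c : ℕ) (σ : ℕ → ℤ) (i : ℕ) :
    pureEntry c σ i =
      1 / ((∏ k ∈ (range (c + 1)).erase i, (σ i - σ k).natAbs : ℕ) : ℚ) := by
  simp [pureEntry, Nat.cast_prod, Int.cast_abs]

theorem Finset.prod_range_erase_eq_mul_prod_Ico {M : Type*} [CommMonoid M] (f : ℕ → M)
    {i n : ℕ} (h : i < n) :
    ∏ k ∈ (range n).erase i, f k = (∏ k ∈ range i, f k) * ∏ k ∈ Ico (i + 1) n, f k := by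
  rw [← prod_union]
  · congr 1
    ext k
    simp only [mem_erase, mem_range, mem_union, mem_Ico]
    omega
  · simp only [disjoint_left, mem_range, mem_Ico]
    omega

section gorSeq

variable {c s t j k : ℕ}

theorem gorSeq_zero : gorSeq c s t j 0 = 0 := rfl

theorem gorSeq_self (hc : c ≠ 0) : gorSeq c s t j c = s + c := by
  simp only [gorSeq, if_neg hc, if_true]

theorem gorSeq_of_le (hj : 1 ≤ j) (hk : 0 < k) (hkc : k ≤ c - j) :
    gorSeq c s t j k = t + k := by
  simp only [gorSeq, if_neg hk.ne', if_neg (show k ≠ c by omega), if_pos hkc]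

theorem gorSeq_of_lt (hk : c - j < k) (hkc : k < c) : gorSeq c s t j k = s - t + k := by
  simp only [gorSeq, if_neg (show k ≠ 0 by omega), if_neg hkc.ne,
    if_neg (show ¬k ≤ c - j by omega)]

end gorSeq

-- The parameters are `s = u + 2t`, `i = a + 1`, `j = q + 1` and `r = c - j - i`.
theorem prod_natAbs_gorSeq_sub (u t a r q : ℕ) :
    ∏ k ∈ (range (a + r + q + 3)).erase (a + 1),
        (gorSeq (a + r + q + 2) (u + 2 * t) t (q + 1) (a + 1) -
          gorSeq (a + r + q + 2) (u + 2 * t) t (q + 1) k).natAbs =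
      a ! * (t + (a + 1)) * (r ! * (u + r + 1).ascFactorial q * (u + t + r + q + 1)) := by
  set σ := gorSeq (a + r + q + 2) (u + 2 * t) t (q + 1)
  have first_strand (k : ℕ) (hk : 0 < k) (hkr : k ≤ a + r + 1) : σ k = t + k :=
    gorSeq_of_le (by omega) hk (by omega)
  have second_strand (k : ℕ) (hk : a + r + 1 < k) (hkc : k < a + r + q + 2) :
      σ k = u + t + k := by
    simp only [σ, gorSeq_of_lt (show a + r + q + 2 - (q + 1) < k by omega) hkc]
    push_cast
    ring
  have hσi : σ (a + 1) = t + (a + 1 : ℕ) := first_strand _ (by omega) (by omega)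
  have below : ∏ k ∈ range a, (σ (a + 1) - σ (k + 1)).natAbs = a ! := by
    rw [← descFactorial_self, descFactorial_eq_prod_range]
    refine prod_congr rfl fun k hk => ?_
    rw [mem_range] at hk
    rw [hσi, first_strand _ (by omega) (by omega)]
    omega
  have above_first : ∏ k ∈ Ico (a + 2) (a + r + 2), (σ (a + 1) - σ k).natAbs = r ! := by
    rw [prod_Ico_eq_prod_range, ← prod_range_add_one_eq_factorial,
      show a + r + 2 - (a + 2) = r by omega]
    refine prod_congr rfl fun k hk => ?_
    rw [mem_range] at hk
    rw [hσi, first_strand _ (by omega) (by omega)]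
    omega
  have above_second : ∏ k ∈ Ico (a + r + 2) (a + r + q + 2), (σ (a + 1) - σ k).natAbs =
      (u + r + 1).ascFactorial q := by
    rw [prod_Ico_eq_prod_range, ascFactorial_eq_prod_range,
      show a + r + q + 2 - (a + r + 2) = q by omega]
    refine prod_congr rfl fun k hk => ?_
    rw [mem_range] at hk
    rw [hσi, second_strand _ (by omega) (by omega)]
    omega
  have to_start : (σ (a + 1) - σ 0).natAbs = t + (a + 1) := by
    rw [hσi, show σ 0 = 0 from gorSeq_zero]
    omega
  have to_end : (σ (a + 1) - σ (a + r + q + 2)).natAbs = u + t + r + q + 1 := by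
    rw [hσi, show σ (a + r + q + 2) = _ from gorSeq_self (by omega)]
    omega
  rw [prod_range_erase_eq_mul_prod_Ico _ (by omega), prod_range_succ',
    prod_Ico_succ_top (by omega),
    ← prod_Ico_consecutive _ (show a + 1 + 1 ≤ a + r + 2 by omega) (by omega),
    below, above_first, above_second, to_start, to_end]

theorem prod_natAbs_gorSeq_sub_mul_factorial {c s t j i : ℕ} (hst : 2 * t ≤ s) (hi : 1 ≤ i)
    (hj : 1 ≤ j) (hijc : i + j ≤ c) :
    (∏ k ∈ (range (c + 1)).erase i, (gorSeq c s t j i - gorSeq c s t j k).natAbs) *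
        (s - 2 * t + c - j - i)! =
      (t + i) * (s - t + c - i) * (i - 1)! * (c - j - i)! * (s - 2 * t + c - 1 - i)! := by
  obtain ⟨u, rfl⟩ : ∃ u, s = u + 2 * t := ⟨s - 2 * t, by omega⟩
  obtain ⟨a, rfl⟩ : ∃ a, i = a + 1 := ⟨i - 1, by omega⟩
  obtain ⟨q, rfl⟩ : ∃ q, j = q + 1 := ⟨j - 1, by omega⟩
  obtain ⟨r, rfl⟩ : ∃ r, c = a + r + q + 2 := ⟨c - a - q - 2, by omega⟩
  rw [prod_natAbs_gorSeq_sub,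
    show u + 2 * t - 2 * t + (a + r + q + 2) - (q + 1) - (a + 1) = u + r by omega,
    show u + 2 * t - t + (a + r + q + 2) - (a + 1) = u + t + r + q + 1 by omega,
    show a + r + q + 2 - (q + 1) - (a + 1) = r by omega,
    show u + 2 * t - 2 * t + (a + r + q + 2) - 1 - (a + 1) = u + r + q by omega,
    ← factorial_mul_ascFactorial (u + r) q, Nat.add_sub_cancel]
  ring

theorem pureEntry_gorSeq {c s t j i : ℕ} (hst : 2 * t ≤ s) (hi : 1 ≤ i) (hj : 1 ≤ j)
    (hijc : i + j ≤ c) :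
    pureEntry c (gorSeq c s t j) i = ((s - 2 * t + c - j - i)! : ℚ) /
      (((t + i) * (s - t + c - i) * (i - 1)! * (c - j - i)! * (s - 2 * t + c - 1 - i)! : ℕ) :
        ℚ) := by
  rw [pureEntry_eq_one_div, ← prod_natAbs_gorSeq_sub_mul_factorial hst hi hj hijc, Nat.cast_mul,
    div_mul_cancel_right₀ (by positivity), one_div]

theorem sum_range_factorial_add_div_factorial (u n : ℕ) :
    (u + 1 : ℚ) * ∑ l ∈ range (n + 1), ((u + l)! : ℚ) / l ! = (u + n + 1)! / n ! := by
  induction n with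
  | zero => simp [factorial_succ]
  | succ n ih =>
    rw [sum_range_succ, mul_add, ih, factorial_succ n, ← add_assoc, factorial_succ (u + n + 1)]
    push_cast
    field_simp
    ring

theorem pureEntry_gorSeq_of_mem_Icc {u t a m j : ℕ} (hj : j ∈ Icc 1 (m + 1)) :
    pureEntry (a + m + 2) (gorSeq (a + m + 2) (u + 2 * t) t j) (a + 1) =
      ((u + (m + 1 - j))! : ℚ) / (m + 1 - j)! /
        (((t + (a + 1)) * (u + t + m + 1) * a ! * (u + m)! : ℕ) : ℚ) := by
  rw [mem_Icc] at hj
  rw [pureEntry_gorSeq (by omega) (by omega) hj.1 (by omega),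
    show u + 2 * t - 2 * t + (a + m + 2) - j - (a + 1) = u + (m + 1 - j) by omega,
    show u + 2 * t - t + (a + m + 2) - (a + 1) = u + t + m + 1 by omega,
    show a + m + 2 - j - (a + 1) = m + 1 - j by omega,
    show u + 2 * t - 2 * t + (a + m + 2) - 1 - (a + 1) = u + m by omega, Nat.add_sub_cancel]
  simp only [Nat.cast_mul]
  ring

theorem sum_pureEntry_gorSeq (u t a m : ℕ) :
    (u + 1 : ℚ) * ∑ j ∈ Icc 1 (m + 1),
        pureEntry (a + m + 2) (gorSeq (a + m + 2) (u + 2 * t) t j) (a + 1) =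
      (u + m + 1)! / (((t + (a + 1)) * (u + t + m + 1) * a ! * m ! * (u + m)! : ℕ) : ℚ) := by
  have reflect : ∑ j ∈ Icc 1 (m + 1), ((u + (m + 1 - j))! : ℚ) / (m + 1 - j)! =
      ∑ l ∈ range (m + 1), ((u + l)! : ℚ) / l ! := by
    rw [← Ico_add_one_right_eq_Icc, range_eq_Ico]
    simpa using sum_Ico_reflect (fun l => ((u + l)! : ℚ) / l !) 1 (le_refl (m + 1 + 1))
  rw [sum_congr rfl fun j => pureEntry_gorSeq_of_mem_Icc, ← sum_div, reflect, ← mul_div_assoc,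
    sum_range_factorial_add_div_factorial, div_div]
  simp only [Nat.cast_mul]
  ring

theorem cast_choose_mul_choose (t a m : ℕ) :
    ((t + a + m + 1).choose (t + a + 1) * (t + a).choose t : ℚ) =
      (t + a + m + 1)! / ((t + a + 1) * t ! * a ! * m !) := by
  rw [Nat.cast_choose ℚ (show t + a + 1 ≤ t + a + m + 1 by omega),
    Nat.cast_choose ℚ (show t ≤ t + a by omega), show t + a + m + 1 - (t + a + 1) = m by omega,
    Nat.add_sub_cancel_left, factorial_succ (t + a)]
  push_cast
  field_simp

theorem stmt_10_general (c s t : ℕ) (ht : 0 < t) (hst : 2 * t ≤ s)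
    (i : ℕ) (hi1 : 1 ≤ i) (hic : i ≤ c - 1) :
    ((c + t - 1).choose (i + t) * (t - 1 + i).choose t : ℚ) =
      (((s : ℚ) + 1 - t) * ((t + c - 1).factorial : ℚ) / (t.factorial : ℚ)) *
          pureEntry c (gorSeq c s t 1) i +
        (((s : ℚ) + 1 - 2 * t) * ((t + c - 1).factorial : ℚ) / (t.factorial : ℚ)) *
          ∑ j ∈ Finset.Icc 2 (c - i), pureEntry c (gorSeq c s t j) i := by
  obtain ⟨u, rfl⟩ : ∃ u, s = u + 2 * t := ⟨s - 2 * t, by omega⟩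
  obtain ⟨a, rfl⟩ : ∃ a, i = a + 1 := ⟨i - 1, by omega⟩
  obtain ⟨m, rfl⟩ : ∃ m, c = a + m + 2 := ⟨c - a - 2, by omega⟩
  have first := pureEntry_gorSeq_of_mem_Icc (u := u) (t := t) (a := a) (m := m) (j := 1)
    (by simp)
  have total := sum_pureEntry_gorSeq u t a m
  rw [Icc_eq_cons_Ioc (by omega), sum_cons, ← Icc_add_one_left_eq_Ioc, first] at total
  rw [show a + m + 2 - (a + 1) = m + 1 by omega, first,
    show a + m + 2 + t - 1 = t + a + m + 1 by omega, show a + 1 + t = t + a + 1 by omega,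
    show t - 1 + (a + 1) = t + a by omega, show t + (a + m + 2) - 1 = t + a + m + 1 by omega,
    cast_choose_mul_choose]
  simp only [Nat.add_sub_cancel] at total ⊢
  rw [factorial_succ (u + m)] at total
  push_cast at total ⊢
  field_simp at total ⊢
  linear_combination -((t : ℚ) + a + 1) * total

/-- The Betti numbers a_i = C(c+t−1, i+t)·C(t−1+i, t) of a Gorenstein ring with
    two linear strands match the Boij–Söderberg decomposition:
    a_i = a·β_i(π_{σ_1}) + b·∑_{j=2}^{c−i} β_i(π_{σ_j}). -/
theorem stmt_10 (c s t : ℕ) (hc : 0 < c) (hs : 0 < s) (ht : 0 < t) (hst : 2 * t ≤ s)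
    (i : ℕ) (hi1 : 1 ≤ i) (hic : i ≤ c - 1) :
    ((c + t - 1).choose (i + t) * (t - 1 + i).choose t : ℚ) =
      (((s : ℚ) + 1 - t) * ((t + c - 1).factorial : ℚ) / (t.factorial : ℚ)) *
          pureEntry c (gorSeq c s t 1) i +
        (((s : ℚ) + 1 - 2 * t) * ((t + c - 1).factorial : ℚ) / (t.factorial : ℚ)) *
          ∑ j ∈ Finset.Icc 2 (c - i), pureEntry c (gorSeq c s t j) i :=
  stmt_10_general c s t ht hst i hi1 hic
end

section
/- For positive integers s, t, c with s ≥ 2t and any i with 1 ≤ i ≤ c−1, the identity (s+c−i−t)/(s+1−2t) = (s+1−t)/(s+1−2t) + ∑_{j=2}^{c−i} C(c−1−i, j−1)/C(s−2t+c−1−i, j−1) holds. -/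
/-!
With `a = c - 1 - i` and `b = s - 2t`, the left side exceeds the first term on the right by
`a / (b + 1)`, so the claim is `∑_{k=1}^{a} C(a,k) / C(a+b,k) = a / (b+1)`. Counting the same
trinomial coefficient two ways gives `C(a,k) / C(a+b,k) = C(a+b-k, b) / C(a+b, b)`, and the
hockey-stick identity sums the numerators over `0 ≤ k ≤ a` to
`C(a+b+1, b+1) = (a+b+1)/(b+1) · C(a+b, b)`.
-/

open Finset

theorem Nat.add_choose_mul_add_sub_choose {a k : ℕ} (b : ℕ) (hk : k ≤ a) :
    (a + b).choose k * (a + b - k).choose b = a.choose k * (a + b).choose b := by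
  have h := Nat.choose_mul (n := a + b) hk
  have e : a + b - k = a - k + b := by omega
  rw [Nat.choose_symm_add, e, Nat.choose_symm_add] at h
  rw [e, ← h, mul_comm]

variable {K : Type*} [Field K] [CharZero K]

theorem Nat.cast_choose_div_cast_add_choose {a k : ℕ} (b : ℕ) (hk : k ≤ a) :
    (a.choose k : K) / (a + b).choose k = (a + b - k).choose b / (a + b).choose b := by
  rw [div_eq_div_iff (Nat.cast_ne_zero.mpr (Nat.choose_pos (by omega)).ne')
    (Nat.cast_ne_zero.mpr (Nat.choose_pos (by omega)).ne')]
  exact_mod_cast (Nat.add_choose_mul_add_sub_choose b hk).symm.trans (mul_comm _ _)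

theorem Nat.sum_range_cast_choose_div_cast_add_choose (a b : ℕ) :
    ∑ k ∈ range (a + 1), (a.choose k : K) / (a + b).choose k = (a + b + 1) / (b + 1) := by
  have hockey :
      ∑ k ∈ range (a + 1), ((a + b - k).choose b : K) = (a + b + 1).choose (b + 1) := by
    rw [← sum_range_reflect, ← Nat.sum_range_add_choose, Nat.cast_sum]
    refine sum_congr rfl fun k hk => ?_
    rw [show a + b - (a + 1 - 1 - k) = k + b by have := mem_range.mp hk; omega]
  have hmul :
      ((a + b + 1 : ℕ) : K) * (a + b).choose b = (a + b + 1).choose (b + 1) * (b + 1) := by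
    exact_mod_cast Nat.add_one_mul_choose_eq (a + b) b
  rw [sum_congr rfl fun k hk =>
      Nat.cast_choose_div_cast_add_choose b (Nat.lt_succ_iff.mp (mem_range.mp hk)),
    ← sum_div, hockey, div_eq_div_iff (Nat.cast_ne_zero.mpr (Nat.choose_pos (by omega)).ne')
    (Nat.cast_add_one_ne_zero b)]
  push_cast at hmul
  linear_combination -hmul

theorem Nat.sum_Icc_cast_choose_div_cast_add_choose (a b : ℕ) :
    ∑ k ∈ Icc 1 a, (a.choose k : K) / (a + b).choose k = a / (b + 1) := by
  have h := Nat.sum_range_cast_choose_div_cast_add_choose (K := K) a b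
  rw [Nat.range_succ_eq_Icc_zero, ← insert_Icc_add_one_left_eq_Icc a.zero_le,
    sum_insert (by simp), zero_add] at h
  simp only [Nat.choose_zero_right, Nat.cast_one, div_one] at h
  have hb := Nat.cast_add_one_ne_zero (R := K) b
  rw [← add_right_inj 1, h]
  field_simp
  ring

theorem stmt_12_general (s t c : ℕ) (hc : 0 < c) (hst : 2 * t ≤ s)
    (i : ℕ) (hic : i ≤ c - 1) :
    ((s : ℚ) + c - i - t) / ((s : ℚ) + 1 - 2 * t) =
      ((s : ℚ) + 1 - t) / ((s : ℚ) + 1 - 2 * t) +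
        ∑ j ∈ Finset.Icc 2 (c - i),
          ((c - 1 - i).choose (j - 1) : ℚ) / ((s - 2 * t + c - 1 - i).choose (j - 1) : ℚ) := by
  obtain ⟨a, rfl⟩ : ∃ a, c = a + 1 + i := ⟨c - 1 - i, by omega⟩
  obtain ⟨b, rfl⟩ : ∃ b, s = b + 2 * t := ⟨s - 2 * t, by omega⟩
  rw [show a + 1 + i - i = a + 1 by omega, show a + 1 + i - 1 - i = a by omega,
    show b + 2 * t - 2 * t + (a + 1 + i) - 1 - i = a + b by omega, ← map_add_right_Icc 1 a 1,
    sum_map]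
  simp only [addRightEmbedding_apply, Nat.add_sub_cancel]
  rw [Nat.sum_Icc_cast_choose_div_cast_add_choose]
  have hb := Nat.cast_add_one_ne_zero (R := ℚ) b
  push_cast
  rw [show (b : ℚ) + 2 * t + 1 - 2 * t = b + 1 by ring]
  field_simp
  ring

/-- The binomial identity used for the positive Betti numbers in the Gorenstein
    Boij–Söderberg decomposition. -/
theorem stmt_12 (s t c : ℕ) (hs : 0 < s) (ht : 0 < t) (hc : 0 < c) (hst : 2 * t ≤ s)
    (i : ℕ) (hi1 : 1 ≤ i) (hic : i ≤ c - 1) :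
    ((s : ℚ) + c - i - t) / ((s : ℚ) + 1 - 2 * t) =
      ((s : ℚ) + 1 - t) / ((s : ℚ) + 1 - 2 * t) +
        ∑ j ∈ Finset.Icc 2 (c - i),
          ((c - 1 - i).choose (j - 1) : ℚ) / ((s - 2 * t + c - 1 - i).choose (j - 1) : ℚ) :=
  stmt_12_general s t c hc hst i hic
end

section
/- Let c ≥ 2, and let σ_1 < σ_2 < ... < σ_t be strictly increasing integer degree sequences of length c+1 (ordered by the componentwise partial order on equal-length sequences). Suppose there exist positive rationals a_1, ..., a_t and an integer m such that ∑_i a_i π_{σ_i} = ∑_i a_i π_{m + σ_{i}^*} as diagrams. Then a_i = a_{t+1−i} and σ_i = m + σ_{t+1−i}^* for all i. -/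
/-- The pure diagram π_σ of a strictly increasing degree sequence
    σ = (d_0,...,d_c), as a table of rational entries indexed by homological
    degree i ∈ ℕ and internal degree j ∈ ℤ: β_{i,j} = ∏_{k≠i} 1/|d_i − d_k| if
    j = d_i, and 0 otherwise. -/
def pureDiagram (c : ℕ) (σ : Fin (c + 1) → ℤ) : ℕ → ℤ → ℚ := fun i j =>
  ∑ k : Fin (c + 1),
    if (k : ℕ) = i ∧ σ k = j then
      ∏ l ∈ Finset.univ.erase k, (1 : ℚ) / ((|σ k - σ l| : ℤ) : ℚ)
    else 0

/-!
The diagram `π_σ` is supported on the points `(k, σ k)` and is positive there, so a positive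
combination along a chain `σ_0 < σ_1 < ⋯` has no cancellation. Its support in row `k` therefore
starts at `σ_0 k`, which recovers `σ_0`; at a row `k` with `σ_0 k < σ_1 k` only `π_{σ_0}`
contributes, which recovers the first coefficient. Peeling off the first term shows that a
positive combination along a chain determines the chain and its coefficients. The dual
sequences `m + σ_i^*` again form a chain, in reversed order, so the two sides of the hypothesis
match term by term after reversing the index.
-/

open Finset

variable {c : ℕ}

/-- The degree sequence `m + σ^*`. -/
def dualShift (m : ℤ) (σ : Fin (c + 1) → ℤ) : Fin (c + 1) → ℤ := fun k => m - σ k.rev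

theorem StrictMono.dualShift {σ : Fin (c + 1) → ℤ} (hσ : StrictMono σ) (m : ℤ) :
    StrictMono (dualShift m σ) := fun _ _ hkl =>
  sub_lt_sub_left (hσ (Fin.rev_lt_rev.mpr hkl)) m

theorem dualShift_strictAnti (m : ℤ) : StrictAnti (dualShift (c := c) m) := by
  intro σ τ hστ
  obtain ⟨hle, k, hk⟩ := Pi.lt_def.mp hστ
  refine Pi.lt_def.mpr ⟨fun l => sub_le_sub_left (hle l.rev) m, k.rev, ?_⟩
  simpa [dualShift] using hk

theorem pureDiagram_val (σ : Fin (c + 1) → ℤ) (k : Fin (c + 1)) (q : ℤ) :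
    pureDiagram c σ k q =
      if σ k = q then ∏ l ∈ univ.erase k, (1 : ℚ) / ((|σ k - σ l| : ℤ) : ℚ) else 0 := by
  rw [pureDiagram, sum_eq_single k]
  · simp
  · intro l _ hlk
    rw [if_neg fun h => hlk (Fin.val_injective h.1)]
  · simp

theorem pureDiagram_nonneg (σ : Fin (c + 1) → ℤ) (p : ℕ) (q : ℤ) :
    0 ≤ pureDiagram c σ p q :=
  sum_nonneg fun _ _ => by
    split_ifs
    · exact prod_nonneg fun _ _ => by positivity
    · exact le_rfl

theorem pureDiagram_pos {σ : Fin (c + 1) → ℤ} (hσ : StrictMono σ) (k : Fin (c + 1)) :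
    0 < pureDiagram c σ k (σ k) := by
  rw [pureDiagram_val, if_pos rfl]
  refine prod_pos fun l hl => one_div_pos.mpr ?_
  have hne : σ k - σ l ≠ 0 := sub_ne_zero.mpr (hσ.injective.ne (ne_of_mem_erase hl).symm)
  exact_mod_cast abs_pos.mpr hne

theorem pureDiagram_eq_zero {σ : Fin (c + 1) → ℤ} {k : Fin (c + 1)} {q : ℤ} (h : σ k ≠ q) :
    pureDiagram c σ k q = 0 := by
  rw [pureDiagram_val, if_neg h]

theorem exists_forall_zero_lt_succ_of_strictMono {ι β : Type*} [Nonempty ι] [Preorder β]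
    {n : ℕ} {σ : Fin (n + 1) → ι → β} (hσ : StrictMono σ) :
    ∃ k, ∀ i : Fin n, σ 0 k < σ i.succ k := by
  cases n with
  | zero => exact ⟨Classical.arbitrary ι, fun i => i.elim0⟩
  | succ n =>
    obtain ⟨-, k, hk⟩ := Pi.lt_def.mp (hσ (Fin.zero_lt_one (n := n)))
    exact ⟨k, fun i => hk.trans_le (hσ.monotone (Fin.succ_le_succ_iff.mpr (Fin.zero_le i)) k)⟩

section Combination

variable {n : ℕ}

theorem sum_mul_pureDiagram_pos {a : Fin n → ℚ} {σ : Fin n → Fin (c + 1) → ℤ}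
    (ha : ∀ i, 0 < a i) (hσ : ∀ i, StrictMono (σ i)) {k : Fin (c + 1)} {i : Fin n} :
    0 < ∑ j, a j * pureDiagram c (σ j) k (σ i k) :=
  sum_pos' (fun j _ => mul_nonneg (ha j).le (pureDiagram_nonneg _ _ _))
    ⟨i, mem_univ _, mul_pos (ha i) (pureDiagram_pos (hσ i) k)⟩

theorem sum_mul_pureDiagram_eq_zero {a : Fin n → ℚ} {σ : Fin n → Fin (c + 1) → ℤ}
    {k : Fin (c + 1)} {q : ℤ} (h : ∀ i, σ i k ≠ q) :
    ∑ i, a i * pureDiagram c (σ i) k q = 0 :=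
  sum_eq_zero fun i _ => by rw [pureDiagram_eq_zero (h i), mul_zero]

variable {σ ρ : Fin (n + 1) → Fin (c + 1) → ℤ} {a b : Fin (n + 1) → ℚ}

theorem head_le_head_of_sum_eq (hσ : StrictMono σ) (hρi : ∀ i, StrictMono (ρ i))
    (hb : ∀ i, 0 < b i)
    (h : ∀ p q, ∑ i, a i * pureDiagram c (σ i) p q = ∑ i, b i * pureDiagram c (ρ i) p q) :
    σ 0 ≤ ρ 0 := by
  intro k
  by_contra! hlt
  have hzero : ∑ i, a i * pureDiagram c (σ i) k (ρ 0 k) = 0 :=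
    sum_mul_pureDiagram_eq_zero fun i =>
      (hlt.trans_le (hσ.monotone (Fin.zero_le i) k)).ne'
  exact (sum_mul_pureDiagram_pos hb hρi).ne' (hzero ▸ h k (ρ 0 k)).symm

theorem coeff_head_le_of_sum_eq (hσ : StrictMono σ) (hσi : ∀ i, StrictMono (σ i))
    (hb : ∀ i, 0 < b i) (hσρ : σ 0 = ρ 0)
    (h : ∀ p q, ∑ i, a i * pureDiagram c (σ i) p q = ∑ i, b i * pureDiagram c (ρ i) p q) :
    b 0 ≤ a 0 := by
  obtain ⟨k, hk⟩ := exists_forall_zero_lt_succ_of_strictMono hσ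
  have hleft : ∑ i, a i * pureDiagram c (σ i) k (σ 0 k) =
      a 0 * pureDiagram c (σ 0) k (σ 0 k) := by
    rw [Fin.sum_univ_succ, sum_mul_pureDiagram_eq_zero fun i => (hk i).ne', add_zero]
  have hright : b 0 * pureDiagram c (σ 0) k (σ 0 k) ≤
      ∑ i, b i * pureDiagram c (ρ i) k (σ 0 k) := by
    rw [Fin.sum_univ_succ, hσρ]
    exact le_add_of_nonneg_right
      (sum_nonneg fun i _ => mul_nonneg (hb _).le (pureDiagram_nonneg _ _ _))
  rw [← h, hleft] at hright
  exact le_of_mul_le_mul_right hright (pureDiagram_pos (hσi 0) k)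

end Combination

theorem eq_of_sum_mul_pureDiagram_eq {n : ℕ} {σ ρ : Fin n → Fin (c + 1) → ℤ} {a b : Fin n → ℚ}
    (hσ : StrictMono σ) (hρ : StrictMono ρ)
    (hσi : ∀ i, StrictMono (σ i)) (hρi : ∀ i, StrictMono (ρ i))
    (ha : ∀ i, 0 < a i) (hb : ∀ i, 0 < b i)
    (h : ∀ p q, ∑ i, a i * pureDiagram c (σ i) p q = ∑ i, b i * pureDiagram c (ρ i) p q) :
    a = b ∧ σ = ρ := by
  induction n with
  | zero => exact ⟨Subsingleton.elim _ _, Subsingleton.elim _ _⟩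
  | succ n ih =>
    have h' p q := (h p q).symm
    have hσρ : σ 0 = ρ 0 :=
      le_antisymm (head_le_head_of_sum_eq hσ hρi hb h) (head_le_head_of_sum_eq hρ hσi ha h')
    have hab : a 0 = b 0 :=
      le_antisymm (coeff_head_le_of_sum_eq hρ hρi ha hσρ.symm h')
        (coeff_head_le_of_sum_eq hσ hσi hb hσρ h)
    have htail p q : ∑ i : Fin n, a i.succ * pureDiagram c (σ i.succ) p q =
        ∑ i : Fin n, b i.succ * pureDiagram c (ρ i.succ) p q := by
      have := h p q
      rwa [Fin.sum_univ_succ, Fin.sum_univ_succ, hσρ, hab, add_right_inj] at this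
    obtain ⟨hab', hσρ'⟩ := ih (hσ.comp Fin.strictMono_succ) (hρ.comp Fin.strictMono_succ)
      (fun i => hσi i.succ) (fun i => hρi i.succ) (fun i => ha i.succ) (fun i => hb i.succ) htail
    refine ⟨funext fun i => ?_, funext fun i => ?_⟩ <;> cases i using Fin.cases
    exacts [hab, congrFun hab' _, hσρ, congrFun hσρ' _]

theorem stmt_17_general (c : ℕ) (t : ℕ)
    (σ : Fin t → Fin (c + 1) → ℤ) (hmono : ∀ i, StrictMono (σ i))
    (horder : ∀ i j : Fin t, i < j → (∀ k, σ i k ≤ σ j k) ∧ σ i ≠ σ j)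
    (a : Fin t → ℚ) (ha : ∀ i, 0 < a i) (m : ℤ)
    (heq : ∀ p q, ∑ i, a i * pureDiagram c (σ i) p q =
      ∑ i, a i * pureDiagram c (fun k => m - σ i k.rev) p q) :
    ∀ i : Fin t, a i = a i.rev ∧ σ i = fun k => m - σ i.rev k.rev := by
  have hσ : StrictMono σ := fun i j hij => lt_of_le_of_ne (horder i j hij).1 (horder i j hij).2
  have hdual : StrictMono fun i : Fin t => dualShift m (σ i.rev) :=
    (dualShift_strictAnti m).comp (hσ.comp_strictAnti Fin.rev_strictAnti)
  have heq' p q : ∑ i, a i * pureDiagram c (σ i) p q =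
      ∑ i : Fin t, a i.rev * pureDiagram c (dualShift m (σ i.rev)) p q :=
    (heq p q).trans (Equiv.sum_comp Fin.revPerm _).symm
  obtain ⟨hab, hσρ⟩ := eq_of_sum_mul_pureDiagram_eq hσ hdual hmono
    (fun i => (hmono i.rev).dualShift m) ha (fun i => ha i.rev) heq'
  exact fun i => ⟨congrFun hab i, congrFun hσρ i⟩

/-- Self-duality of the Boij–Söderberg decomposition: if a positive linear
    combination of pure diagrams along a chain σ_1 < ... < σ_t equals the
    corresponding combination of the shifted duals m + σ_i^*, then the
    coefficients are palindromic and σ_i = m + σ_{t+1−i}^* for all i. -/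
theorem stmt_17 (c : ℕ) (hc : 2 ≤ c) (t : ℕ) (ht : 0 < t)
    (σ : Fin t → Fin (c + 1) → ℤ) (hmono : ∀ i, StrictMono (σ i))
    (horder : ∀ i j : Fin t, i < j → (∀ k, σ i k ≤ σ j k) ∧ σ i ≠ σ j)
    (a : Fin t → ℚ) (ha : ∀ i, 0 < a i) (m : ℤ)
    (heq : ∀ p q, ∑ i, a i * pureDiagram c (σ i) p q =
      ∑ i, a i * pureDiagram c (fun k => m - σ i k.rev) p q) :
    ∀ i : Fin t, a i = a i.rev ∧ σ i = fun k => m - σ i.rev k.rev :=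
  stmt_17_general c t σ hmono horder a ha m heq
end

section
/- For positive integers d and c, and degree sequences σ_j = (0, 2, ..., c−j+1, n−1−j, ..., n−2, n) of length c+1 where n = c+d (i.e., σ_j has entries 0, then 2,3,...,c−j+1, then n−1−j, n−j, ..., n−2, then n), the identity d·c!·(β_0(π_{σ_1}) + β_0(π_{σ_c})) + (d−1)·c!·∑_{j=2}^{c−1} β_0(π_{σ_j}) = 1 holds, where β_0(π_σ) = ∏_{k=1}^{c} 1/σ_k. -/
/-!
Consecutive sequences `σ_j`, `σ_{j+1}` differ only in position `c - j`, where the entry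
`c - j + 1` becomes `d - 1 + (c - j)`; hence `(c - j + 1) β_j = (d - 1 + c - j) β_{j+1}`.
So `(d - 1) β_{j+1} = H j - H (j + 1)` with `H j = (c - j + 1) β_j`, the middle sum telescopes to
`c β_1 - 2 β_{c-1} = c β_1 - d β_c`, and the left-hand side collapses to `c! (c + d) β_1`,
which is `1` since `σ_1 = (0, 2, 3, …, c, c + d)`.
-/

/-- The degree sequence σ_j for stacked polytopes (the case s = d, t = 1 of the
    Gorenstein decomposition), with n = c + d: σ_j(0) = 0, σ_j(c) = n,
    σ_j(k) = k + 1 for 1 ≤ k ≤ c − j and σ_j(k) = n − c − 1 + k = d − 1 + k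
    for c − j + 1 ≤ k ≤ c − 1. -/
def stackedSeq (d c j : ℕ) : ℕ → ℕ := fun k =>
  if k = 0 then 0
  else if k = c then c + d
  else if k ≤ c - j then k + 1
  else d - 1 + k

/-- β_0(π_{σ_j}) = ∏_{k=1}^{c} 1/σ_j(k). -/
def stackedBeta0 (d c j : ℕ) : ℚ :=
  ∏ k ∈ Finset.Icc 1 c, (1 : ℚ) / ((stackedSeq d c j k : ℕ) : ℚ)

open Finset Nat

theorem Finset.prod_Icc_add_one_eq_factorial (n : ℕ) : ∏ k ∈ Icc 1 n, (k + 1) = (n + 1)! := by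
  induction n with
  | zero => rfl
  | succ n ih => rw [prod_Icc_succ_top (by omega), ih, factorial_succ (n + 1), mul_comm]

theorem mul_prod_one_div_eq_prod_erase {ι K : Type*} [DecidableEq ι] [Field K] {s : Finset ι}
    {f : ι → K} {a : ι} (ha : a ∈ s) (hfa : f a ≠ 0) :
    f a * ∏ i ∈ s, 1 / f i = ∏ i ∈ s.erase a, 1 / f i := by
  rw [← mul_prod_erase s _ ha, ← mul_assoc, mul_one_div_cancel hfa, one_mul]

section Stacked

variable {d c j k : ℕ}

theorem stackedSeq_of_lt (hk : 1 ≤ k) (hkc : k < c) (hkj : k ≤ c - j) :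
    stackedSeq d c j k = k + 1 := by
  unfold stackedSeq
  split_ifs <;> omega

theorem stackedSeq_self (hc : c ≠ 0) : stackedSeq d c j c = c + d := by
  simp [stackedSeq, hc]

theorem stackedSeq_succ_of_ne (hk : k ≠ c - j) :
    stackedSeq d c (j + 1) k = stackedSeq d c j k := by
  unfold stackedSeq
  split_ifs <;> omega

theorem stackedSeq_ne_zero (hk : k ≠ 0) : stackedSeq d c j k ≠ 0 := by
  unfold stackedSeq
  split_ifs <;> omega

theorem prod_Icc_stackedSeq_one (hc : 1 ≤ c) :
    ∏ k ∈ Icc 1 c, stackedSeq d c 1 k = c ! * (c + d) := by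
  obtain ⟨b, rfl⟩ : ∃ b, c = b + 1 := ⟨c - 1, by omega⟩
  rw [prod_Icc_succ_top (by omega), stackedSeq_self (by omega), ← prod_Icc_add_one_eq_factorial]
  congr 1
  refine prod_congr rfl fun k hk => ?_
  rw [mem_Icc] at hk
  exact stackedSeq_of_lt hk.1 (by omega) (by omega)

theorem stackedBeta0_one (hc : 1 ≤ c) : stackedBeta0 d c 1 = 1 / ((c + d) * c ! : ℚ) := by
  rw [stackedBeta0, prod_div_distrib, prod_const_one, ← Nat.cast_prod, prod_Icc_stackedSeq_one hc]
  push_cast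
  ring

theorem stackedSeq_mul_stackedBeta0 (hk : k ∈ Icc 1 c) :
    (stackedSeq d c j k : ℚ) * stackedBeta0 d c j =
      ∏ i ∈ (Icc 1 c).erase k, 1 / (stackedSeq d c j i : ℚ) := by
  rw [mem_Icc] at hk
  exact mul_prod_one_div_eq_prod_erase (f := fun i => (stackedSeq d c j i : ℚ)) (mem_Icc.2 hk)
    (Nat.cast_ne_zero.2 (stackedSeq_ne_zero (by omega)))

theorem stackedBeta0_succ (hj : 1 ≤ j) (hjc : j < c) :
    ((c - j + 1 : ℕ) : ℚ) * stackedBeta0 d c j =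
      ((d - 1 + (c - j) : ℕ) : ℚ) * stackedBeta0 d c (j + 1) := by
  have hk : c - j ∈ Icc 1 c := mem_Icc.2 ⟨by omega, by omega⟩
  have hσj : stackedSeq d c j (c - j) = c - j + 1 := stackedSeq_of_lt (by omega) (by omega) le_rfl
  have hσj' : stackedSeq d c (j + 1) (c - j) = d - 1 + (c - j) := by
    unfold stackedSeq
    split_ifs <;> omega
  rw [← hσj, ← hσj', stackedSeq_mul_stackedBeta0 hk, stackedSeq_mul_stackedBeta0 hk]
  refine prod_congr rfl fun i hi => ?_
  rw [stackedSeq_succ_of_ne (ne_of_mem_erase hi)]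

theorem sub_one_mul_sum_Icc_stackedBeta0 (hd : 1 ≤ d) {m : ℕ} (hm : 1 ≤ m) (hmc : m < c) :
    ((d : ℚ) - 1) * ∑ j ∈ Icc 2 m, stackedBeta0 d c j =
      c * stackedBeta0 d c 1 - ((c - m + 1 : ℕ) : ℚ) * stackedBeta0 d c m := by
  induction m, hm using Nat.le_induction with
  | base => simp [show c - 1 + 1 = c by omega]
  | succ m hm ih =>
    rw [sum_Icc_succ_top (by omega), mul_add, ih (by omega), sub_add_eq_add_sub,
      stackedBeta0_succ hm (by omega), show c - m = c - (m + 1) + 1 by omega]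
    push_cast [hd]
    ring

end Stacked

/-- The β_0 identity for the Boij–Söderberg decomposition of stacked polytopes:
    d·c!·(β_0(π_{σ_1}) + β_0(π_{σ_c})) + (d−1)·c!·∑_{j=2}^{c−1} β_0(π_{σ_j}) = 1. -/
theorem stmt_19 (d c : ℕ) (hd : 0 < d) (hc : 2 ≤ c) :
    (d : ℚ) * (c.factorial : ℚ) * (stackedBeta0 d c 1 + stackedBeta0 d c c) +
        ((d : ℚ) - 1) * (c.factorial : ℚ) *
          ∑ j ∈ Finset.Icc 2 (c - 1), stackedBeta0 d c j = 1 := by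
  have htop : 2 * stackedBeta0 d c (c - 1) = d * stackedBeta0 d c c := by
    have := stackedBeta0_succ (d := d) (c := c) (j := c - 1) (by omega) (by omega)
    rwa [show c - (c - 1) + 1 = 2 by omega, show d - 1 + (c - (c - 1)) = d by omega,
      Nat.sub_add_cancel (by omega : 1 ≤ c), Nat.cast_two] at this
  have hsum := sub_one_mul_sum_Icc_stackedBeta0 (c := c) (m := c - 1) hd (by omega) (by omega)
  rw [show c - (c - 1) + 1 = 2 by omega, Nat.cast_two, htop] at hsum
  calc _ = (c ! : ℚ) * (d * stackedBeta0 d c 1 + d * stackedBeta0 d c c +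
          ((d : ℚ) - 1) * ∑ j ∈ Icc 2 (c - 1), stackedBeta0 d c j) := by ring
    _ = (c ! : ℚ) * ((c + d) * stackedBeta0 d c 1) := by rw [hsum]; ring
    _ = 1 := by
      rw [stackedBeta0_one (by omega)]
      have : (c ! : ℚ) ≠ 0 := by positivity
      field_simp
end
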